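/- With W_{n,n+1} and φ as above, define v ∈ C([0,1], M_n ⊗ M_{n+1}) by v(t) = t^{1/2}(1−t)^{1/2} Σ_{j=1}^n e_{j1} ⊗ e_{n+1,j}. Then v ∈ W_{n,n+1}, ‖v‖ ≤ 1, v² = 0, vv* = φ(1_n)(1 − φ(1_n)), and v·φ^{1/2}(e_{11}) = v, where φ^{1/2}(e_{11})(t) = (e_{11} ⊗ 1_n) ⊕ (1−t)^{1/2}(e_{11} ⊗ e_{n+1,n+1}). -/

import Mathlib

open Matrix
open scoped Kronecker Matrix.Norms.L2Operator

noncomputable section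

variable (n : ℕ) [NeZero n]

/-- The rank-one projection `e_{n+1,n+1}` in `M_{n+1}`. -/
def Elast : Matrix (Fin (n + 1)) (Fin (n + 1)) ℂ :=
  Matrix.single (Fin.last n) (Fin.last n) 1

/-- The Razak building block `W_{n,n+1}`. -/
def Wblock :
    Set C(Set.Icc (0 : ℝ) 1,
      Matrix (Fin n × Fin (n + 1)) (Fin n × Fin (n + 1)) ℂ) :=
  {f | ∃ a : Matrix (Fin n) (Fin n) ℂ,
    f ⟨0, by norm_num⟩ = a ⊗ₖ (1 : Matrix (Fin (n + 1)) (Fin (n + 1)) ℂ) ∧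
    f ⟨1, by norm_num⟩ = a ⊗ₖ ((1 : Matrix (Fin (n + 1)) (Fin (n + 1)) ℂ) - Elast n)}

/-- `φ(a)(t) = (a ⊗ 1ₙ) ⊕ (1−t)(a ⊗ e_{n+1,n+1})`. -/
def Wphi (a : Matrix (Fin n) (Fin n) ℂ) :
    C(Set.Icc (0 : ℝ) 1,
      Matrix (Fin n × Fin (n + 1)) (Fin n × Fin (n + 1)) ℂ) :=
  ⟨fun t => a ⊗ₖ ((1 : Matrix (Fin (n + 1)) (Fin (n + 1)) ℂ) - Elast n)
      + (1 - (t : ℝ)) • (a ⊗ₖ Elast n),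
    continuous_const.add
      (((continuous_const.sub continuous_subtype_val)).smul continuous_const)⟩

/-- `v(t) = t^{1/2}(1−t)^{1/2} Σ_{j=1}^n e_{j1} ⊗ e_{n+1,j}`. -/
def Wv :
    C(Set.Icc (0 : ℝ) 1,
      Matrix (Fin n × Fin (n + 1)) (Fin n × Fin (n + 1)) ℂ) :=
  ⟨fun t => (Real.sqrt (t : ℝ) * Real.sqrt (1 - (t : ℝ))) •
      ∑ j : Fin n, Matrix.single j 0 (1 : ℂ) ⊗ₖ
        Matrix.single (Fin.last n) j.castSucc (1 : ℂ),
    (((Real.continuous_sqrt.comp continuous_subtype_val).mul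
      (Real.continuous_sqrt.comp
        (continuous_const.sub continuous_subtype_val))).smul continuous_const)⟩

/-- `φ^{1/2}(e₁₁)(t) = (e₁₁ ⊗ 1ₙ) ⊕ (1−t)^{1/2}(e₁₁ ⊗ e_{n+1,n+1})`. -/
def WphiHalf11 :
    C(Set.Icc (0 : ℝ) 1,
      Matrix (Fin n × Fin (n + 1)) (Fin n × Fin (n + 1)) ℂ) :=
  ⟨fun t => Matrix.single (0 : Fin n) 0 (1 : ℂ) ⊗ₖ
        ((1 : Matrix (Fin (n + 1)) (Fin (n + 1)) ℂ) - Elast n)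
      + Real.sqrt (1 - (t : ℝ)) •
        (Matrix.single (0 : Fin n) 0 (1 : ℂ) ⊗ₖ Elast n),
    continuous_const.add
      ((Real.continuous_sqrt.comp
        (continuous_const.sub continuous_subtype_val)).smul continuous_const)⟩

-- helpers
lemma my_kronecker_sub {l m p q : Type*} (A : Matrix l m ℂ) (B C : Matrix p q ℂ) :
    A ⊗ₖ (B - C) = A ⊗ₖ B - A ⊗ₖ C := by
  ext ⟨i,i'⟩ ⟨j,j'⟩
  simp [Matrix.kroneckerMap_apply, mul_sub]

lemma my_sub_kronecker {l m p q : Type*} (A B : Matrix l m ℂ) (C : Matrix p q ℂ) :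
    (A - B) ⊗ₖ C = A ⊗ₖ C - B ⊗ₖ C := by
  ext ⟨i,i'⟩ ⟨j,j'⟩
  simp [Matrix.kroneckerMap_apply, sub_mul]

lemma my_sum_kronecker {ι l m p q : Type*} (s : Finset ι) (f : ι → Matrix l m ℂ)
    (B : Matrix p q ℂ) : (∑ i ∈ s, f i) ⊗ₖ B = ∑ i ∈ s, (f i) ⊗ₖ B := by
  ext ⟨i,i'⟩ ⟨j,j'⟩
  simp [Matrix.kroneckerMap_apply, Matrix.sum_apply, Finset.sum_mul]

lemma my_std_conjTranspose {m : Type*} [DecidableEq m] (i j : m) (c : ℂ) :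
    (Matrix.single i j c)ᴴ = Matrix.single j i (star c) := by
  ext a b
  simp [Matrix.conjTranspose_apply, Matrix.single, and_comm, apply_ite (starRingEnd ℂ)]

lemma my_kron_conjTranspose {l m p q : Type*} (A : Matrix l m ℂ) (B : Matrix p q ℂ) :
    (A ⊗ₖ B)ᴴ = Aᴴ ⊗ₖ Bᴴ := by
  ext ⟨i,i'⟩ ⟨j,j'⟩
  simp [Matrix.conjTranspose_apply, Matrix.kroneckerMap_apply, mul_comm]

lemma my_sum_diag : ∑ j : Fin n, Matrix.single j j (1:ℂ) = 1 := by
  ext i k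
  rw [Matrix.sum_apply]
  simp only [Matrix.single, Matrix.of_apply, Matrix.one_apply]
  rcases eq_or_ne i k with rfl | h
  · simp
  · rw [Finset.sum_eq_zero, if_neg h]
    intro j _
    rw [if_neg]
    rintro ⟨rfl, rfl⟩
    exact h rfl

def Umat : Matrix (Fin n × Fin (n + 1)) (Fin n × Fin (n + 1)) ℂ :=
  ∑ j : Fin n, Matrix.single j 0 (1 : ℂ) ⊗ₖ
    Matrix.single (Fin.last n) j.castSucc (1 : ℂ)

lemma U_mul_U : Umat n * Umat n = 0 := by
  rw [Umat, Finset.sum_mul_sum]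
  refine Finset.sum_eq_zero fun j _ => Finset.sum_eq_zero fun k _ => ?_
  rw [← mul_kronecker_mul, Matrix.single_mul_single_of_ne (h := (Fin.castSucc_lt_last j).ne),
    kronecker_zero]

lemma U_star : star (Umat n) =
    ∑ j : Fin n, Matrix.single (0 : Fin n) j (1 : ℂ) ⊗ₖ
      Matrix.single j.castSucc (Fin.last n) (1 : ℂ) := by
  rw [Matrix.star_eq_conjTranspose, Umat, Matrix.conjTranspose_sum]
  refine Finset.sum_congr rfl fun j _ => ?_
  rw [my_kron_conjTranspose, my_std_conjTranspose, my_std_conjTranspose, star_one]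

lemma U_mul_star : Umat n * star (Umat n) =
    (1 : Matrix (Fin n) (Fin n) ℂ) ⊗ₖ Elast n := by
  rw [U_star, Umat, Finset.sum_mul_sum, ← my_sum_diag n, my_sum_kronecker]
  refine Finset.sum_congr rfl fun j _ => ?_
  rw [Finset.sum_eq_single j]
  · rw [← mul_kronecker_mul, Matrix.single_mul_single_same, Matrix.single_mul_single_same,
      mul_one, Elast]
  · intro k _ hk
    rw [← mul_kronecker_mul, Matrix.single_mul_single_of_ne
      (h := fun h => hk (Fin.castSucc_injective n h).symm), kronecker_zero]
  · intro h; exact absurd (Finset.mem_univ j) h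

lemma U_mul_eE : Umat n * (Matrix.single (0 : Fin n) (0 : Fin n) (1 : ℂ) ⊗ₖ Elast n) = 0 := by
  rw [Umat, Finset.sum_mul]
  refine Finset.sum_eq_zero fun j _ => ?_
  rw [Elast, ← mul_kronecker_mul, Matrix.single_mul_single_of_ne (h := (Fin.castSucc_lt_last j).ne),
    kronecker_zero]

lemma U_mul_q : Umat n * (Matrix.single (0 : Fin n) (0 : Fin n) (1 : ℂ) ⊗ₖ
    ((1 : Matrix (Fin (n + 1)) (Fin (n + 1)) ℂ) - Elast n)) = Umat n := by
  rw [my_kronecker_sub, mul_sub, U_mul_eE, sub_zero, Umat, Finset.sum_mul]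
  refine Finset.sum_congr rfl fun j _ => ?_
  rw [← mul_kronecker_mul, Matrix.single_mul_single_same, Matrix.mul_one, mul_one]

lemma E_mul_E : Elast n * Elast n = Elast n := by
  rw [Elast, Matrix.single_mul_single_same, mul_one]

lemma p_star : star ((1 : Matrix (Fin n) (Fin n) ℂ) ⊗ₖ Elast n) =
    (1 : Matrix (Fin n) (Fin n) ℂ) ⊗ₖ Elast n := by
  rw [Matrix.star_eq_conjTranspose, my_kron_conjTranspose, Matrix.conjTranspose_one,
    Elast, my_std_conjTranspose, star_one]

lemma p_mul_p : ((1 : Matrix (Fin n) (Fin n) ℂ) ⊗ₖ Elast n) *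
    ((1 : Matrix (Fin n) (Fin n) ℂ) ⊗ₖ Elast n) =
    (1 : Matrix (Fin n) (Fin n) ℂ) ⊗ₖ Elast n := by
  rw [← mul_kronecker_mul, one_mul, E_mul_E]

lemma U_norm_le : ‖Umat n‖ ≤ 1 := by
  have h1 : ‖Umat n * star (Umat n)‖ = ‖Umat n‖ * ‖Umat n‖ := CStarRing.norm_self_mul_star
  set p := (1 : Matrix (Fin n) (Fin n) ℂ) ⊗ₖ Elast n with hp
  rw [U_mul_star] at h1
  have h2 : ‖p * star p‖ = ‖p‖ * ‖p‖ := CStarRing.norm_self_mul_star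
  rw [p_star, p_mul_p] at h2
  have hU := norm_nonneg (Umat n)
  have hpn := norm_nonneg p
  have hp1 : ‖p‖ ≤ 1 := by nlinarith [sq_nonneg (‖p‖ - 1)]
  nlinarith [sq_nonneg (‖Umat n‖ - 1), sq_nonneg (‖Umat n‖ + 1)]

lemma q_mul_p : ((1 : Matrix (Fin n) (Fin n) ℂ) ⊗ₖ
((1 : Matrix (Fin (n + 1)) (Fin (n + 1)) ℂ) - Elast n)) *
    ((1 : Matrix (Fin n) (Fin n) ℂ) ⊗ₖ Elast n) = 0 := by
  rw [← mul_kronecker_mul, one_mul, sub_mul, one_mul, E_mul_E, sub_self, kronecker_zero]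

lemma phi_identity (r : ℝ) :
    ((1 : Matrix (Fin n) (Fin n) ℂ) ⊗ₖ ((1 : Matrix (Fin (n + 1)) (Fin (n + 1)) ℂ) - Elast n)
        + r • ((1 : Matrix (Fin n) (Fin n) ℂ) ⊗ₖ Elast n)) *
      ((1 : Matrix (Fin n × Fin (n + 1)) (Fin n × Fin (n + 1)) ℂ)
        - ((1 : Matrix (Fin n) (Fin n) ℂ) ⊗ₖ
            ((1 : Matrix (Fin (n + 1)) (Fin (n + 1)) ℂ) - Elast n)
          + r • ((1 : Matrix (Fin n) (Fin n) ℂ) ⊗ₖ Elast n))) =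
    ((1 - r) * r) • ((1 : Matrix (Fin n) (Fin n) ℂ) ⊗ₖ Elast n) := by
  have h1 : (1 : Matrix (Fin n × Fin (n + 1)) (Fin n × Fin (n + 1)) ℂ)
      - ((1 : Matrix (Fin n) (Fin n) ℂ) ⊗ₖ
          ((1 : Matrix (Fin (n + 1)) (Fin (n + 1)) ℂ) - Elast n)
        + r • ((1 : Matrix (Fin n) (Fin n) ℂ) ⊗ₖ Elast n)) =
      (1 - r) • ((1 : Matrix (Fin n) (Fin n) ℂ) ⊗ₖ Elast n) := by
    rw [my_kronecker_sub, one_kronecker_one]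
    module
  rw [h1, add_mul, mul_smul_comm, q_mul_p, smul_zero, zero_add, smul_mul_assoc,
    mul_smul_comm, p_mul_p, smul_smul, mul_comm r (1 - r)]

/-- The element `v` lies in `W_{n,n+1}`, is a contraction with `v² = 0`,
`v v* = φ(1ₙ)(1 − φ(1ₙ))`, and `v·φ^{1/2}(e₁₁) = v`. -/
theorem stmt14 :
    Wv n ∈ Wblock n ∧
    ‖Wv n‖ ≤ 1 ∧
    Wv n * Wv n = 0 ∧
    Wv n * star (Wv n) = Wphi n 1 * (1 - Wphi n 1) ∧
    Wv n * WphiHalf11 n = Wv n := by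
  have hWv : ∀ t : Set.Icc (0 : ℝ) 1,
      Wv n t = (Real.sqrt (t : ℝ) * Real.sqrt (1 - (t : ℝ))) • Umat n := fun t => rfl
  refine ⟨⟨0, ?_, ?_⟩, ?_, ?_, ?_, ?_⟩
  · rw [hWv]
    simp [zero_kronecker]
  · rw [hWv]
    simp [zero_kronecker]
  · rw [ContinuousMap.norm_le _ zero_le_one]
    intro t
    obtain ⟨ht0, ht1⟩ := t.2
    rw [hWv, norm_smul, Real.norm_of_nonneg (by positivity)]
    have h1 : Real.sqrt (t : ℝ) ≤ 1 := Real.sqrt_le_one.mpr ht1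
    have h2 : Real.sqrt (1 - (t : ℝ)) ≤ 1 := Real.sqrt_le_one.mpr (by linarith)
    have h3 : (0:ℝ) ≤ Real.sqrt (t : ℝ) := Real.sqrt_nonneg _
    have h4 : (0:ℝ) ≤ Real.sqrt (1 - (t : ℝ)) := Real.sqrt_nonneg _
    have h5 := U_norm_le n
    have h6 := norm_nonneg (Umat n)
    nlinarith [mul_nonneg h3 h4, mul_le_mul h1 h2 h4 zero_le_one,
      mul_le_mul (mul_le_mul h1 h2 h4 zero_le_one) h5 h6 (by norm_num)]
  · refine ContinuousMap.ext fun t => ?_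
    rw [ContinuousMap.mul_apply, hWv, smul_mul_assoc, mul_smul_comm, U_mul_U,
      smul_zero, smul_zero, ContinuousMap.zero_apply]
  · refine ContinuousMap.ext fun t => ?_
    obtain ⟨ht0, ht1⟩ := t.2
    rw [ContinuousMap.mul_apply, ContinuousMap.star_apply, hWv, star_smul,
      star_trivial, smul_mul_assoc, mul_smul_comm, smul_smul, U_mul_star]
    have hs : Real.sqrt (t : ℝ) * Real.sqrt (1 - (t : ℝ)) *
        (Real.sqrt (t : ℝ) * Real.sqrt (1 - (t : ℝ))) = (1 - (1 - (t : ℝ))) * (1 - (t : ℝ)) := by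
      rw [mul_mul_mul_comm, Real.mul_self_sqrt ht0, Real.mul_self_sqrt (by linarith)]
      ring
    rw [hs, ContinuousMap.mul_apply, ContinuousMap.sub_apply, ContinuousMap.one_apply]
    exact (phi_identity n (1 - (t : ℝ))).symm
  · refine ContinuousMap.ext fun t => ?_
    rw [ContinuousMap.mul_apply, hWv, smul_mul_assoc]
    show (Real.sqrt (t : ℝ) * Real.sqrt (1 - (t : ℝ))) •
      (Umat n * (Matrix.single (0 : Fin n) (0 : Fin n) (1 : ℂ) ⊗ₖ
          ((1 : Matrix (Fin (n + 1)) (Fin (n + 1)) ℂ) - Elast n)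
        + Real.sqrt (1 - (t : ℝ)) •
          (Matrix.single (0 : Fin n) (0 : Fin n) (1 : ℂ) ⊗ₖ Elast n))) = Wv n t
    rw [mul_add, U_mul_q, mul_smul_comm, U_mul_eE, smul_zero, add_zero, hWv]


end
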